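/- arXiv:2405.09696 — 4 statements merged into one kernel-verified Lean document; each statement's English description precedes it below -/
import Mathlib

section
/- The pushforward of the uniform probability measure on the unit circle under the Möbius map g(z) = (e^{iψ} z + α)/(1 + conj(α) e^{iψ} z), with |α| < 1, has density (with respect to normalized arclength) equal to the Poisson kernel (1 − |α|²)/|e^{iφ} − α|² at the point e^{iφ} (times 1/(2π) with respect to dφ). -/
open MeasureTheory Complex Real
open scoped ENNReal

noncomputable def mobius (ψ : ℝ) (α : ℂ) (z : ℂ) : ℂ :=
  (Complex.exp (ψ * Complex.I) * z + α) / (1 + (starRingEnd ℂ) α * Complex.exp (ψ * Complex.I) * z)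

/-- The uniform (normalized arclength) probability measure on the unit circle in ℂ,
realized as the pushforward of normalized Lebesgue measure on [0,2π) under φ ↦ e^{iφ}. -/
noncomputable def uniformCircle : Measure ℂ :=
  Measure.map (fun φ : ℝ => Complex.exp (φ * Complex.I))
    ((ENNReal.ofReal (2 * π))⁻¹ • volume.restrict (Set.Ico 0 (2 * π)))

/-- The probability measure on the circle with Poisson-kernel density
(1/(2π)) (1−|α|²)/|e^{iφ}−α|² with respect to dφ. -/
noncomputable def poissonMeasure (α : ℂ) : Measure ℂ :=
  Measure.map (fun φ : ℝ => Complex.exp (φ * Complex.I))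
    ((volume.restrict (Set.Ico 0 (2 * π))).withDensity
      (fun φ => ENNReal.ofReal
        ((1 / (2 * π)) * (1 - ‖α‖ ^ 2) /
          ‖Complex.exp (φ * Complex.I) - α‖ ^ 2)))

open Set Function

/-! On the unit circle the Möbius map lifts along `φ ↦ exp (φ * I)` to
`θ φ = ψ + φ - 2 arg D(φ)` (`mobiusAngle`), where `D(φ) = 1 + conj α * exp (ψ * I) * exp (φ * I)`
(`mobiusDenom`): for `‖z‖ = 1` the numerator `exp (ψ * I) * z + α` equals
`exp (ψ * I) * z * conj D`, and `conj D / D = exp (-2 i arg D)`.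
As `D` stays in the right half-plane, `θ` is smooth with `θ' = (1 - ‖α‖²) / ‖D‖² > 0`, and
`θ (φ + 2π) = θ φ + 2π`, so `θ` maps `[0, 2π)` bijectively onto `[θ 0, θ 0 + 2π)`.
Since `‖exp (θ φ * I) - α‖² = (1 - ‖α‖²)² / ‖D‖²`, the Poisson density at `θ φ` times `θ' φ` is
exactly `1 / (2π)`: the change of variables `θ` carries normalized Lebesgue measure on `[0, 2π)` to
the Poisson density on `[θ 0, θ 0 + 2π)`, and periodicity moves that interval back to `[0, 2π)`. -/

theorem Function.Periodic.setLIntegral_Ioc_add_eq {T : ℝ} (hT : 0 < T) {F : ℝ → ℝ≥0∞}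
    (hF : Periodic F T) (a b : ℝ) :
    ∫⁻ x in Ioc a (a + T), F x = ∫⁻ x in Ioc b (b + T), F x := by
  have : Fact (0 < T) := ⟨hT⟩
  exact (AddCircle.lintegral_preimage T a hF.lift).trans
    (AddCircle.lintegral_preimage T b hF.lift).symm

theorem map_withDensity_restrict_Ico_add_eq_of_periodic {Y : Type*} [MeasurableSpace Y]
    {T : ℝ} (hT : 0 < T) {f : ℝ → Y} {g : ℝ → ℝ≥0∞} (hf : Periodic f T) (hg : Periodic g T)
    (hfm : Measurable f) (a b : ℝ) :
    Measure.map f ((volume.restrict (Ico a (a + T))).withDensity g)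
      = Measure.map f ((volume.restrict (Ico b (b + T))).withDensity g) := by
  ext s hs
  have hper : Periodic ((f ⁻¹' s).indicator g) T := fun x => by
    classical simp [indicator_apply, hf x, hg x]
  simp only [Measure.map_apply hfm hs, withDensity_apply _ (hfm hs), restrict_Ico_eq_restrict_Ioc,
    ← lintegral_indicator (hfm hs)]
  exact hper.setLIntegral_Ioc_add_eq hT a b

theorem map_withDensity_restrict_eq_withDensity_restrict_image {s : Set ℝ} {f f' : ℝ → ℝ}
    {g : ℝ → ℝ≥0∞} (hs : MeasurableSet s) (hf' : ∀ x ∈ s, HasDerivWithinAt f (f' x) s x)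
    (hf : InjOn f s) (hfm : Measurable f) :
    Measure.map f ((volume.restrict s).withDensity fun x => ENNReal.ofReal |f' x| * g (f x))
      = (volume.restrict (f '' s)).withDensity g := by
  ext t ht
  rw [Measure.map_apply hfm ht, withDensity_apply _ (hfm ht), withDensity_apply _ ht,
    Measure.restrict_restrict (hfm ht), Measure.restrict_restrict ht, ← image_preimage_inter,
    lintegral_image_eq_lintegral_abs_deriv_mul ((hfm ht).inter hs)
      (fun x hx => (hf' x hx.2).mono inter_subset_right) (hf.mono inter_subset_right)]

theorem StrictMonoOn.image_Ico_of_continuousOn {α δ : Type*} [ConditionallyCompleteLinearOrder α]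
    [TopologicalSpace α] [OrderTopology α] [DenselyOrdered α] [LinearOrder δ] [TopologicalSpace δ]
    [OrderClosedTopology δ] {f : α → δ} {a b : α} (hab : a ≤ b) (hf : StrictMonoOn f (Icc a b))
    (hc : ContinuousOn f (Icc a b)) : f '' Ico a b = Ico (f a) (f b) := by
  refine Subset.antisymm ?_ (intermediate_value_Ico hab hc)
  rintro _ ⟨x, hx, rfl⟩
  exact ⟨hf.monotoneOn ⟨le_rfl, hab⟩ (Ico_subset_Icc_self hx) hx.1,
    hf (Ico_subset_Icc_self hx) ⟨hab, le_rfl⟩ hx.2⟩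

theorem Complex.periodic_exp_ofReal_mul_I : Periodic (fun φ : ℝ => exp (φ * I)) (2 * π) :=
  fun φ => by push_cast; exact exp_mul_I_periodic φ

theorem Complex.conj_div_self_eq_exp_arg {x : ℂ} (hx : x ≠ 0) :
    starRingEnd ℂ x / x = exp (↑(-2 * arg x) * I) := by
  conv_lhs => rw [← norm_mul_exp_arg_mul_I x]
  rw [map_mul, ← exp_conj, conj_ofReal, map_mul, conj_ofReal, conj_I,
    mul_div_mul_left _ _ (by simpa using hx), ← exp_sub]
  congr 1
  push_cast
  ring

noncomputable def mobiusDenom (ψ : ℝ) (α z : ℂ) : ℂ :=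
  1 + starRingEnd ℂ α * exp (ψ * I) * z

noncomputable def mobiusAngle (ψ : ℝ) (α : ℂ) (φ : ℝ) : ℝ :=
  ψ + φ - 2 * arg (mobiusDenom ψ α (exp (φ * I)))

section

variable (ψ : ℝ)

theorem mobiusDenom_re_pos {α : ℂ} (hα : ‖α‖ < 1) {z : ℂ} (hz : ‖z‖ ≤ 1) :
    0 < (mobiusDenom ψ α z).re := by
  have hw : ‖starRingEnd ℂ α * exp (ψ * I) * z‖ < 1 := by
    rw [norm_mul, norm_mul, RCLike.norm_conj, norm_exp_ofReal_mul_I, mul_one]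
    exact (mul_le_of_le_one_right (norm_nonneg α) hz).trans_lt hα
  obtain ⟨hre, -⟩ := abs_lt.1 ((abs_re_le_norm _).trans_lt hw)
  simp only [mobiusDenom, add_re, one_re]
  linarith

theorem mobiusDenom_ne_zero {α : ℂ} (hα : ‖α‖ < 1) {z : ℂ} (hz : ‖z‖ ≤ 1) : mobiusDenom ψ α z ≠ 0 :=
  fun h => by simpa [h] using mobiusDenom_re_pos ψ hα hz

theorem mul_conj_mobiusDenom (α : ℂ) {z : ℂ} (hz : ‖z‖ = 1) :
    exp (ψ * I) * z * starRingEnd ℂ (mobiusDenom ψ α z) = exp (ψ * I) * z + α := by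
  have hu : exp (ψ * I) * starRingEnd ℂ (exp (ψ * I)) = 1 := by
    rw [mul_conj, normSq_eq_norm_sq, norm_exp_ofReal_mul_I]; simp
  have hz' : z * starRingEnd ℂ z = 1 := by
    rw [mul_conj, normSq_eq_norm_sq, hz]; simp
  simp only [mobiusDenom, map_add, map_one, map_mul, conj_conj]
  linear_combination α * (exp (ψ * I) * starRingEnd ℂ (exp (ψ * I))) * hz' + α * hu

theorem mobius_eq_div_mobiusDenom (α z : ℂ) :
    mobius ψ α z = (exp (ψ * I) * z + α) / mobiusDenom ψ α z := rfl

theorem mobius_sub_self (α : ℂ) {z : ℂ} (hD : mobiusDenom ψ α z ≠ 0) :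
    mobius ψ α z - α = (1 - ‖α‖ ^ 2 : ℝ) * (exp (ψ * I) * z) / mobiusDenom ψ α z := by
  rw [mobius_eq_div_mobiusDenom, eq_div_iff hD, sub_mul, div_mul_cancel₀ _ hD]
  push_cast
  rw [mobiusDenom]
  linear_combination (-(exp (ψ * I) * z)) * conj_mul' α

theorem exp_mobiusAngle_mul_I {α : ℂ} (hα : ‖α‖ < 1) (φ : ℝ) :
    exp (mobiusAngle ψ α φ * I) = mobius ψ α (exp (φ * I)) := by
  have hz : ‖exp (φ * I)‖ = 1 := norm_exp_ofReal_mul_I φ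
  have hD := mobiusDenom_ne_zero ψ hα hz.le
  rw [mobius_eq_div_mobiusDenom, ← mul_conj_mobiusDenom ψ α hz, mul_div_assoc,
    conj_div_self_eq_exp_arg hD, ← Complex.exp_add, ← Complex.exp_add, mobiusAngle]
  congr 1
  push_cast
  ring

theorem mobiusAngle_add_two_pi (α : ℂ) (φ : ℝ) :
    mobiusAngle ψ α (φ + 2 * π) = mobiusAngle ψ α φ + 2 * π := by
  rw [mobiusAngle, mobiusAngle,
    show exp (↑(φ + 2 * π) * I) = exp (φ * I) from periodic_exp_ofReal_mul_I φ]
  ring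

theorem norm_mobius_sub_self_sq {α : ℂ} (hα : ‖α‖ < 1) {z : ℂ} (hz : ‖z‖ = 1) :
    ‖mobius ψ α z - α‖ ^ 2 = (1 - ‖α‖ ^ 2) ^ 2 / normSq (mobiusDenom ψ α z) := by
  have h1 : 0 ≤ 1 - ‖α‖ ^ 2 := sub_nonneg.2 (pow_le_one₀ (norm_nonneg α) hα.le)
  rw [mobius_sub_self ψ α (mobiusDenom_ne_zero ψ hα hz.le), norm_div, norm_mul, norm_mul,
    norm_real, Real.norm_of_nonneg h1, norm_exp_ofReal_mul_I, hz, div_pow,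
    normSq_eq_norm_sq (mobiusDenom ψ α z)]
  ring

theorem hasDerivAt_mobiusAngle {α : ℂ} (hα : ‖α‖ < 1) (φ : ℝ) :
    HasDerivAt (mobiusAngle ψ α)
      ((1 - ‖α‖ ^ 2) / normSq (mobiusDenom ψ α (exp (φ * I)))) φ := by
  set w := starRingEnd ℂ α * exp (ψ * I) * exp (φ * I)
  have hDw : mobiusDenom ψ α (exp (φ * I)) = 1 + w := rfl
  have hw : ‖w‖ = ‖α‖ := by simp [w, norm_exp_ofReal_mul_I]
  have hexp : HasDerivAt (fun t : ℝ => exp (t * I)) (exp (φ * I) * I) φ := by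
    simpa using ((hasDerivAt_id φ).ofReal_comp.mul_const I).cexp
  have hD : HasDerivAt (fun t : ℝ => mobiusDenom ψ α (exp (t * I))) (w * I) φ := by
    simpa [mobiusDenom, w, mul_assoc] using
      (hexp.const_mul (starRingEnd ℂ α * exp (ψ * I))).const_add 1
  have harg : HasDerivAt (fun t : ℝ => arg (mobiusDenom ψ α (exp (t * I))))
      (w * I / (1 + w)).im φ := by
    have hlog := hD.clog_real (Or.inl (mobiusDenom_re_pos ψ hα (norm_exp_ofReal_mul_I φ).le))
    simpa only [Function.comp_def, imCLM_apply, log_im, hDw] using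
      imCLM.hasFDerivAt.comp_hasDerivAt φ hlog
  refine (((hasDerivAt_id' φ).const_add ψ).sub (harg.const_mul 2)).congr_deriv ?_
  have hne : normSq (1 + w) ≠ 0 :=
    (normSq_pos.2 (mobiusDenom_ne_zero ψ hα (norm_exp_ofReal_mul_I φ).le)).ne'
  rw [hDw, ← hw, ← normSq_eq_norm_sq, div_im]
  simp only [normSq_apply, mul_I_re, mul_I_im, add_re, add_im, one_re, one_im, zero_add] at hne ⊢
  rw [← sub_div, mul_div_assoc', one_sub_div hne]
  ring

theorem strictMono_mobiusAngle {α : ℂ} (hα : ‖α‖ < 1) : StrictMono (mobiusAngle ψ α) :=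
  strictMono_of_hasDerivAt_pos (hasDerivAt_mobiusAngle ψ hα) fun φ =>
    div_pos (sub_pos.2 (pow_lt_one₀ (norm_nonneg α) hα two_ne_zero))
      (normSq_pos.2 (mobiusDenom_ne_zero ψ hα (norm_exp_ofReal_mul_I φ).le))

end

noncomputable def poissonDensity (α : ℂ) (φ : ℝ) : ℝ≥0∞ :=
  ENNReal.ofReal ((1 / (2 * π)) * (1 - ‖α‖ ^ 2) / ‖exp (φ * I) - α‖ ^ 2)

theorem periodic_poissonDensity (α : ℂ) : Periodic (poissonDensity α) (2 * π) :=
  periodic_exp_ofReal_mul_I.comp fun z =>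
    ENNReal.ofReal ((1 / (2 * π)) * (1 - ‖α‖ ^ 2) / ‖z - α‖ ^ 2)

theorem ofReal_abs_deriv_mobiusAngle_mul_poissonDensity (ψ : ℝ) {α : ℂ} (hα : ‖α‖ < 1) (φ : ℝ) :
    ENNReal.ofReal |(1 - ‖α‖ ^ 2) / normSq (mobiusDenom ψ α (exp (φ * I)))|
        * poissonDensity α (mobiusAngle ψ α φ) = (ENNReal.ofReal (2 * π))⁻¹ := by
  have h1 : 0 < 1 - ‖α‖ ^ 2 := sub_pos.2 (pow_lt_one₀ (norm_nonneg α) hα two_ne_zero)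
  have hN : 0 < normSq (mobiusDenom ψ α (exp (φ * I))) :=
    normSq_pos.2 (mobiusDenom_ne_zero ψ hα (norm_exp_ofReal_mul_I φ).le)
  rw [poissonDensity, exp_mobiusAngle_mul_I ψ hα,
    norm_mobius_sub_self_sq ψ hα (norm_exp_ofReal_mul_I φ), abs_of_pos (div_pos h1 hN),
    ← ENNReal.ofReal_mul (div_pos h1 hN).le, ← ENNReal.ofReal_inv_of_pos two_pi_pos]
  congr 1
  field_simp

theorem pushforward_uniform_is_poisson (ψ : ℝ) (α : ℂ) (hα : ‖α‖ < 1) :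
    Measure.map (mobius ψ α) uniformCircle = poissonMeasure α := by
  have hθ := hasDerivAt_mobiusAngle ψ hα
  have hθ_mono := strictMono_mobiusAngle ψ hα
  have hθ_cont : Continuous (mobiusAngle ψ α) :=
    continuous_iff_continuousAt.2 fun φ => (hθ φ).continuousAt
  have hexp : Measurable fun φ : ℝ => exp (φ * I) := by fun_prop
  have hlift : mobius ψ α ∘ (fun φ : ℝ => exp (φ * I))
      = (fun φ : ℝ => exp (φ * I)) ∘ mobiusAngle ψ α :=
    funext fun φ => (exp_mobiusAngle_mul_I ψ hα φ).symm
  have hdensity : (ENNReal.ofReal (2 * π))⁻¹ • volume.restrict (Ico 0 (2 * π))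
      = (volume.restrict (Ico 0 (2 * π))).withDensity fun φ =>
          ENNReal.ofReal |(1 - ‖α‖ ^ 2) / normSq (mobiusDenom ψ α (exp (φ * I)))|
            * poissonDensity α (mobiusAngle ψ α φ) := by
    simp only [ofReal_abs_deriv_mobiusAngle_mul_poissonDensity ψ hα, withDensity_const]
  rw [uniformCircle, Measure.map_map (by unfold mobius; fun_prop) hexp, hlift,
    ← Measure.map_map hexp hθ_cont.measurable, hdensity,
    map_withDensity_restrict_eq_withDensity_restrict_image measurableSet_Ico
      (fun φ _ => (hθ φ).hasDerivWithinAt) hθ_mono.injective.injOn hθ_cont.measurable,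
    hθ_mono.strictMonoOn _ |>.image_Ico_of_continuousOn two_pi_pos.le hθ_cont.continuousOn,
    ← zero_add (2 * π), mobiusAngle_add_two_pi,
    map_withDensity_restrict_Ico_add_eq_of_periodic two_pi_pos periodic_exp_ofReal_mul_I
      (periodic_poissonDensity α) hexp _ 0, zero_add]
  rfl
end

section
/- If z(t) on the unit circle satisfies the Riccati equation ż = i z² f(t) + i ω z + i conj(f(t)) for a continuous complex-valued function f and real ω, then |z(t)| = 1 for all t whenever |z(0)| = 1; i.e., the unit circle is invariant. -/
open Complex

/- Along a solution, `u = ‖z‖² - 1` obeys the scalar linear equation `u' = -2 Im(z f) · u`, so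
`u(t) = u(0) · exp(-2 ∫₀ᵗ Im(z f))`; hence `u(0) = 0` forces `u ≡ 0`. -/

theorem eq_mul_exp_integral_of_hasDerivAt_mul {g u : ℝ → ℝ} (hg : Continuous g)
    (hu : ∀ t, HasDerivAt u (g t * u t) t) (t : ℝ) :
    u t = u 0 * Real.exp (∫ s in (0 : ℝ)..t, g s) := by
  set G : ℝ → ℝ := fun t => ∫ s in (0 : ℝ)..t, g s
  have hG : ∀ t, HasDerivAt G (g t) t := fun t => (hg.integral_hasStrictDerivAt 0 t).hasDerivAt
  have hderiv_zero : ∀ t, HasDerivAt (fun t => u t * Real.exp (-G t)) 0 t := fun t =>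
    ((hu t).mul (hG t).neg.exp).congr_deriv (by ring)
  have hconst := is_const_of_deriv_eq_zero (fun s => (hderiv_zero s).differentiableAt)
    (fun s => (hderiv_zero s).deriv) t 0
  have hG0 : G 0 = 0 := intervalIntegral.integral_same
  simp only [hG0, neg_zero, Real.exp_zero, mul_one] at hconst
  rw [← hconst, mul_assoc, ← Real.exp_add, neg_add_cancel, Real.exp_zero, mul_one]

theorem inner_riccati_field (w c : ℂ) (ω : ℝ) :
    inner ℝ w (I * w ^ 2 * c + I * ω * w + I * (starRingEnd ℂ) c) = -(w * c).im * (‖w‖ ^ 2 - 1) := by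
  rw [Complex.inner, Complex.sq_norm, normSq_apply]
  simp only [add_mul, mul_re, mul_im, add_re, I_re, I_im, ofReal_re, ofReal_im, conj_re, conj_im,
    pow_two]
  ring

theorem hasDerivAt_norm_sq_sub_one_of_riccati {f z : ℝ → ℂ} {ω t : ℝ}
    (hz : HasDerivAt z
      (I * (z t) ^ 2 * f t + I * ω * z t + I * (starRingEnd ℂ) (f t)) t) :
    HasDerivAt (fun t => ‖z t‖ ^ 2 - 1) (-2 * (z t * f t).im * (‖z t‖ ^ 2 - 1)) t := by
  have h := hz.norm_sq.sub_const 1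
  rw [inner_riccati_field] at h
  exact h.congr_deriv (by ring)

theorem riccati_circle_invariant (f : ℝ → ℂ) (hf : Continuous f) (ω : ℝ) (z : ℝ → ℂ)
    (hz : ∀ t : ℝ, HasDerivAt z
      (Complex.I * (z t) ^ 2 * f t + Complex.I * ω * z t + Complex.I * (starRingEnd ℂ) (f t)) t)
    (h0 : ‖z 0‖ = 1) :
    ∀ t : ℝ, ‖z t‖ = 1 := by
  intro t
  have hzc : Continuous z := continuous_iff_continuousAt.2 fun t => (hz t).continuousAt
  have hu := eq_mul_exp_integral_of_hasDerivAt_mul (by fun_prop)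
    (fun t => hasDerivAt_norm_sq_sub_one_of_riccati (hz t)) t
  rw [h0, one_pow, sub_self, zero_mul, sub_eq_zero] at hu
  exact (pow_eq_one_iff_of_nonneg (norm_nonneg _) two_ne_zero).1 hu
end

section
/- Let α(t), ψ(t) solve the Watanabe–Strogatz equations α̇ = i(f α² + ω α + f̄) and ψ̇ = f α + ω + f̄ ᾱ, with |α(t)| < 1, for continuous f : ℝ → ℂ and ω ∈ ℝ. Then for any w on the unit circle, z(t) = (e^{iψ(t)} w + α(t))/(1 + conj(α(t)) e^{iψ(t)} w) solves the Riccati equation ż = i z² f + i ω z + i f̄. -/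
/-! With `u = e^{iψ} w`, the Watanabe–Strogatz equations say `α̇ = i(fα² + ωα + f̄)` and
`u̇ = i(fα + ω + f̄ᾱ) u`. Differentiating `z = (u + α)/(1 + ᾱu)` by the quotient rule, these two
equations turn `ż - i(fz² + ωz + f̄)` into a rational expression in `u, α, ᾱ` that vanishes
identically, and `|α| < 1 = |u|` keeps the denominator away from zero. -/

open Complex ComplexConjugate

theorem one_add_conj_mul_ne_zero {a u : ℂ} (ha : ‖a‖ < 1) (hu : ‖u‖ ≤ 1) :
    1 + conj a * u ≠ 0 := by
  intro h
  have hnorm : ‖conj a * u‖ = 1 := by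
    rw [eq_neg_of_add_eq_zero_right h, norm_neg, norm_one]
  have hlt : ‖conj a * u‖ < 1 := by
    rw [norm_mul, RCLike.norm_conj]
    exact mul_lt_one_of_nonneg_of_lt_one_left (norm_nonneg a) ha hu
  exact hlt.ne hnorm

theorem ofReal_re_add_ofReal_add_conj (z : ℂ) (ω : ℝ) :
    (((z + ω + conj z).re : ℝ) : ℂ) = z + ω + conj z :=
  conj_eq_iff_re.mp (by rw [map_add, map_add, conj_conj, conj_ofReal]; ring)

theorem HasDerivAt.cexp_ofReal_mul_I_mul {ψ : ℝ → ℝ} {ψ' t : ℝ} (h : HasDerivAt ψ ψ' t)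
    (w : ℂ) :
    HasDerivAt (fun s => cexp (ψ s * I) * w) (I * ψ' * (cexp (ψ t * I) * w)) t := by
  refine ((h.ofReal_comp.mul_const I).cexp.mul_const w).congr_deriv ?_
  ring

theorem HasDerivAt.mobius_of_watanabeStrogatz {a u : ℝ → ℂ} {F : ℂ} {ω t : ℝ}
    (ha : HasDerivAt a (I * (F * a t ^ 2 + ω * a t + conj F)) t)
    (hu : HasDerivAt u (I * (F * a t + ω + conj F * conj (a t)) * u t) t)
    (hden : 1 + conj (a t) * u t ≠ 0) :
    HasDerivAt (fun s => (u s + a s) / (1 + conj (a s) * u s))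
      (I * ((u t + a t) / (1 + conj (a t) * u t)) ^ 2 * F +
        I * ω * ((u t + a t) / (1 + conj (a t) * u t)) + I * conj F) t := by
  have hconj : HasDerivAt (fun s => conj (a s))
      (-I * (conj F * conj (a t) ^ 2 + ω * conj (a t) + F)) t :=
    ha.star.congr_deriv <| by
      simp only [star_def, map_mul, map_add, map_pow, conj_I, conj_ofReal, Complex.conj_conj]
  refine ((hu.fun_add ha).fun_div ((hconj.fun_mul hu).const_add 1) hden).congr_deriv ?_
  field_simp
  ring

theorem WS_solves_riccati_general (f : ℝ → ℂ) (ω : ℝ)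
    (α : ℝ → ℂ) (ψ : ℝ → ℝ)
    (hα1 : ∀ t : ℝ, ‖α t‖ < 1)
    (hα : ∀ t : ℝ, HasDerivAt α
      (Complex.I * (f t * (α t) ^ 2 + ω * α t + (starRingEnd ℂ) (f t))) t)
    (hψ : ∀ t : ℝ, HasDerivAt ψ
      ((f t * α t + ω + (starRingEnd ℂ) (f t) * (starRingEnd ℂ) (α t)).re) t)
    (w : ℂ) (hw : ‖w‖ = 1) :
    ∀ t : ℝ, HasDerivAt
      (fun s => (Complex.exp (ψ s * Complex.I) * w + α s) /
        (1 + (starRingEnd ℂ) (α s) * Complex.exp (ψ s * Complex.I) * w))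
      (Complex.I * ((Complex.exp (ψ t * Complex.I) * w + α t) /
          (1 + (starRingEnd ℂ) (α t) * Complex.exp (ψ t * Complex.I) * w)) ^ 2 * f t +
        Complex.I * ω * ((Complex.exp (ψ t * Complex.I) * w + α t) /
          (1 + (starRingEnd ℂ) (α t) * Complex.exp (ψ t * Complex.I) * w)) +
        Complex.I * (starRingEnd ℂ) (f t)) t := by
  intro t
  have hu : HasDerivAt (fun s => cexp (ψ s * I) * w)
      (I * (f t * α t + ω + conj (f t) * conj (α t)) * (cexp (ψ t * I) * w)) t := by
    have h := (hψ t).cexp_ofReal_mul_I_mul w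
    rwa [← map_mul, ofReal_re_add_ofReal_add_conj, map_mul] at h
  have hden : 1 + conj (α t) * (cexp (ψ t * I) * w) ≠ 0 :=
    one_add_conj_mul_ne_zero (hα1 t) (by rw [norm_mul, norm_exp_ofReal_mul_I, hw, one_mul])
  simpa only [mul_assoc] using (hα t).mobius_of_watanabeStrogatz hu hden

theorem WS_solves_riccati (f : ℝ → ℂ) (hf : Continuous f) (ω : ℝ)
    (α : ℝ → ℂ) (ψ : ℝ → ℝ)
    (hα1 : ∀ t : ℝ, ‖α t‖ < 1)
    (hα : ∀ t : ℝ, HasDerivAt α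
      (Complex.I * (f t * (α t) ^ 2 + ω * α t + (starRingEnd ℂ) (f t))) t)
    (hψ : ∀ t : ℝ, HasDerivAt ψ
      ((f t * α t + ω + (starRingEnd ℂ) (f t) * (starRingEnd ℂ) (α t)).re) t)
    (w : ℂ) (hw : ‖w‖ = 1) :
    ∀ t : ℝ, HasDerivAt
      (fun s => (Complex.exp (ψ s * Complex.I) * w + α s) /
        (1 + (starRingEnd ℂ) (α s) * Complex.exp (ψ s * Complex.I) * w))
      (Complex.I * ((Complex.exp (ψ t * Complex.I) * w + α t) /
          (1 + (starRingEnd ℂ) (α t) * Complex.exp (ψ t * Complex.I) * w)) ^ 2 * f t +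
        Complex.I * ω * ((Complex.exp (ψ t * Complex.I) * w + α t) /
          (1 + (starRingEnd ℂ) (α t) * Complex.exp (ψ t * Complex.I) * w)) +
        Complex.I * (starRingEnd ℂ) (f t)) t :=
  WS_solves_riccati_general f ω α ψ hα1 hα hψ w hw
end

section
/- If α(t) solves α̇ = i(f α² + ω α + f̄) with f : ℝ → ℂ continuous, ω ∈ ℝ, and |α(0)| < 1, then |α(t)| < 1 for all t in the interval of existence; i.e., the open unit disc is invariant under the Watanabe–Strogatz flow. -/
open Complex

/-! Along a solution, `u = 1 - ‖α‖²` satisfies the linear equation `u' = -2 Im (f α) · u`, since the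
Riccati vector field is tangent to the unit circle. Hence `u t = u 0 · exp (∫₀ᵗ -2 Im (f α))`
never changes sign. -/

theorem eq_mul_exp_integral_of_hasDerivAt {u F : ℝ → ℝ} (hF : Continuous F)
    (hu : ∀ t, HasDerivAt u (F t * u t) t) (t : ℝ) :
    u t = u 0 * Real.exp (∫ s in (0 : ℝ)..t, F s) := by
  set G : ℝ → ℝ := fun t => ∫ s in (0 : ℝ)..t, F s
  have hw : ∀ s, HasDerivAt (fun s => u s * Real.exp (-G s)) 0 s := fun s => by
    have hG := (hF.integral_hasStrictDerivAt 0 s).hasDerivAt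
    refine ((hu s).mul hG.neg.exp).congr_deriv ?_
    ring
  have hconst : u t * Real.exp (-G t) = u 0 * Real.exp (-G 0) :=
    is_const_of_deriv_eq_zero (fun s => (hw s).differentiableAt) (fun s => (hw s).deriv) t 0
  simp only [G, intervalIntegral.integral_same, neg_zero, Real.exp_zero, mul_one] at hconst
  rw [← hconst, mul_assoc, ← Real.exp_add, neg_add_cancel, Real.exp_zero, mul_one]

theorem Complex.inner_I_mul_riccati (f a : ℂ) (ω : ℝ) :
    inner ℝ a (I * (f * a ^ 2 + ω * a + (starRingEnd ℂ) f)) = (f * a).im * (1 - ‖a‖ ^ 2) := by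
  rw [Complex.inner, ← normSq_eq_norm_sq, normSq_apply]
  simp only [mul_re, mul_im, add_re, add_im, I_re, I_im, conj_re, conj_im, ofReal_re,
    ofReal_im, pow_two]
  ring

theorem WS_disc_invariant (f : ℝ → ℂ) (hf : Continuous f) (ω : ℝ) (α : ℝ → ℂ)
    (hα : ∀ t : ℝ, HasDerivAt α
      (Complex.I * (f t * (α t) ^ 2 + ω * α t + (starRingEnd ℂ) (f t))) t)
    (h0 : ‖α 0‖ < 1) :
    ∀ t : ℝ, ‖α t‖ < 1 := by
  have hαc : Continuous α := continuous_iff_continuousAt.mpr fun t => (hα t).continuousAt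
  have hu : ∀ t, HasDerivAt (fun s => 1 - ‖α s‖ ^ 2)
      (-2 * (f t * α t).im * (1 - ‖α t‖ ^ 2)) t := fun t => by
    refine ((hα t).norm_sq.const_sub 1).congr_deriv ?_
    rw [Complex.inner_I_mul_riccati]
    ring
  intro t
  have hpos : 0 < 1 - ‖α t‖ ^ 2 := by
    rw [eq_mul_exp_integral_of_hasDerivAt (by fun_prop) hu t]
    have : ‖α 0‖ ^ 2 < 1 := (sq_lt_one_iff₀ (norm_nonneg _)).mpr h0
    exact mul_pos (by linarith) (Real.exp_pos _)
  exact (sq_lt_one_iff₀ (norm_nonneg _)).mp (by linarith)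
end
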